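/- Let h be the Hessenberg function h = (2,3,…,n,n) (the Peterson case). The ℚ-algebra homomorphism from the polynomial ring ℚ[y_1,…,y_{n−1},t] to ℚ[x_1,…,x_n,t]/I(h) sending y_j to the class of p_j (1 ≤ j ≤ n−1) and t to the class of t descends to a ℚ-algebra isomorphism ℚ[y_1,…,y_{n−1},t]/((−y_{j−1} + 2y_j − y_{j+1} − 2t)·y_j : 1 ≤ j ≤ n−1) ≅ ℚ[x_1,…,x_n,t]/I(h), where by convention y_0 := 0 and y_n := 0. -/

import Mathlib

open MvPolynomial Finset

/-- The variable `t` in `ℚ[x_1,…,x_n,t]`, realized as `MvPolynomial (Option (Fin n)) ℚ`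
with `t = X none`. -/
noncomputable def tv (n : ℕ) : MvPolynomial (Option (Fin n)) ℚ := X none

/-- The variable `x_k` (for `1 ≤ k ≤ n`) in `ℚ[x_1,…,x_n,t]`. -/
noncomputable def xv (n : ℕ) (k : ℕ) : MvPolynomial (Option (Fin n)) ℚ :=
  if h : k - 1 < n then X (some ⟨k - 1, h⟩) else 0

/-- `p_i = ∑_{k=1}^i (x_k - k t)`, with `p_0 = 0`. -/
noncomputable def pp (n : ℕ) (i : ℕ) : MvPolynomial (Option (Fin n)) ℚ :=
  ∑ k ∈ Finset.range i, (xv n (k + 1) - C ((k : ℚ) + 1) * tv n)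

/-- The polynomials `f_{i,j}`: `f_{i,0} = 0`, `f_{j,j} = p_j`, and
`f_{i,j} = f_{i-1,j-1} + (x_j - x_i - t) f_{i-1,j}` for `i > j ≥ 1`. -/
noncomputable def ff (n : ℕ) : ℕ → ℕ → MvPolynomial (Option (Fin n)) ℚ
  | _, 0 => 0
  | 0, _ + 1 => 0
  | i + 1, j + 1 =>
      if i = j then pp n (j + 1)
      else ff n i j + (xv n (j + 1) - xv n (i + 1) - tv n) * ff n i (j + 1)


/-- The variable `y_j` (for `1 ≤ j ≤ m`) in `ℚ[y_1,…,y_m,t]`, with the conventions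
`y_0 = 0` and `y_j = 0` for `j > m`. -/
noncomputable def yv (m : ℕ) (j : ℕ) : MvPolynomial (Option (Fin m)) ℚ :=
  if h : 1 ≤ j ∧ j - 1 < m then X (some (⟨j - 1, h.2⟩ : Fin m)) else 0

/-! In the coordinates `p_1, …, p_n, t` of `ℚ[x_1,…,x_n,t]` (note `x_k = p_k - p_{k-1} + k t`) the
generators of the Peterson ideal telescope: `f_{j+1,j} = ∑_{k ≤ j} (x_k - x_{k+1} - t) p_k`, and
`x_k - x_{k+1} - t = -p_{k-1} + 2 p_k - p_{k+1} - 2 t`. So `I(h)` is generated by `p_n` and the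
quadratic relations in `p_1, …, p_{n-1}, t`, and killing `p_n` identifies `ℚ[x,t]/I(h)` with the
presented algebra. -/

theorem Ideal.Quotient.exists_algEquiv_of_comp_eq_mkₐ {R A B : Type*} [CommSemiring R]
    [CommRing A] [CommRing B] [Algebra R A] [Algebra R B] {I : Ideal A} {J : Ideal B}
    (φ : A →ₐ[R] B ⧸ J) (ψ : B →ₐ[R] A) (hφ : ∀ a ∈ I, φ a = 0)
    (hψ : ∀ b ∈ J, (Ideal.Quotient.mkₐ R I).comp ψ b = 0)
    (hψφ : (Ideal.Quotient.liftₐ J _ hψ).comp φ = Ideal.Quotient.mkₐ R I)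
    (hφψ : φ.comp ψ = Ideal.Quotient.mkₐ R J) :
    ∃ e : (A ⧸ I) ≃ₐ[R] (B ⧸ J), ∀ a, e (Ideal.Quotient.mk I a) = φ a :=
  ⟨.ofAlgHom (Ideal.Quotient.liftₐ I φ hφ) (Ideal.Quotient.liftₐ J _ hψ)
    (Ideal.Quotient.algHom_ext R <| by
      rw [AlgHom.comp_assoc, Ideal.Quotient.liftₐ_comp, ← AlgHom.comp_assoc,
        Ideal.Quotient.liftₐ_comp, hφψ, AlgHom.id_comp])
    (Ideal.Quotient.algHom_ext R <| by
      rw [AlgHom.comp_assoc, Ideal.Quotient.liftₐ_comp, hψφ, AlgHom.id_comp]),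
    fun a => Ideal.Quotient.lift_mk I _ hφ⟩

def petersonRel {R : Type*} [CommRing R] (y : ℕ → R) (t : R) (j : ℕ) : R :=
  (-y (j - 1) + 2 * y j - y (j + 1) - 2 * t) * y j

theorem map_petersonRel {R S F : Type*} [CommRing R] [CommRing S] [FunLike F R S]
    [RingHomClass F R S] (f : F) (y : ℕ → R) (t : R) (j : ℕ) :
    f (petersonRel y t j) = petersonRel (fun k => f (y k)) (f t) j := by
  simp [petersonRel, map_ofNat]

theorem petersonRel_congr {R : Type*} [CommRing R] {y y' : ℕ → R} (t : R) {j : ℕ}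
    (hy : ∀ k, j - 1 ≤ k → k ≤ j + 1 → y k = y' k) :
    petersonRel y t j = petersonRel y' t j := by
  simp only [petersonRel, hy (j - 1) le_rfl (by omega), hy j (by omega) (by omega),
    hy (j + 1) (by omega) le_rfl]

theorem pp_succ (n k : ℕ) : pp n (k + 1) = pp n k + (xv n (k + 1) - C ((k : ℚ) + 1) * tv n) :=
  sum_range_succ _ _

theorem xv_succ (n k : ℕ) : xv n (k + 1) = pp n (k + 1) - pp n k + C ((k : ℚ) + 1) * tv n := by
  rw [pp_succ]; ring

theorem ff_self (n j : ℕ) : ff n j j = pp n j := by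
  cases j <;> simp [ff, pp]

theorem ff_succ_self (n j : ℕ) :
    ff n (j + 1) j = ∑ k ∈ range j, petersonRel (pp n) (tv n) (k + 1) := by
  induction j with
  | zero => simp [ff]
  | succ j ih =>
    rw [ff, if_neg (by omega), ih, ff_self, sum_range_succ, xv_succ n (j + 1), xv_succ n j,
      petersonRel]
    push_cast
    simp only [map_add, map_one]
    ring

noncomputable def hessenbergIdeal (n : ℕ) (h : ℕ → ℕ) : Ideal (MvPolynomial (Option (Fin n)) ℚ) :=
  Ideal.span ((fun j => ff n (h j) j) '' Set.Icc 1 n)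

noncomputable def petersonRelIdeal (m : ℕ) : Ideal (MvPolynomial (Option (Fin m)) ℚ) :=
  Ideal.span (petersonRel (yv m) (X none) '' Set.Icc 1 m)

section Peterson

variable {n : ℕ} {h : ℕ → ℕ}

theorem ff_succ_self_mem_hessenbergIdeal (hP : ∀ j, 1 ≤ j → j ≤ n - 1 → h j = j + 1) {j : ℕ}
    (hj : j ≤ n - 1) : ff n (j + 1) j ∈ hessenbergIdeal n h := by
  rcases Nat.eq_zero_or_pos j with rfl | hj₀
  · simp [ff]
  · rw [← hP j hj₀ hj]
    exact Ideal.subset_span ⟨j, ⟨hj₀, by omega⟩, rfl⟩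

theorem petersonRel_pp_mem_hessenbergIdeal (hP : ∀ j, 1 ≤ j → j ≤ n - 1 → h j = j + 1)
    {j : ℕ} (hj₀ : 1 ≤ j) (hj : j ≤ n - 1) :
    petersonRel (pp n) (tv n) j ∈ hessenbergIdeal n h := by
  obtain ⟨k, rfl⟩ : ∃ k, j = k + 1 := ⟨j - 1, by omega⟩
  have hsub : petersonRel (pp n) (tv n) (k + 1) = ff n (k + 2) (k + 1) - ff n (k + 1) k := by
    rw [ff_succ_self, ff_succ_self, sum_range_succ, add_sub_cancel_left]
  rw [hsub]
  exact sub_mem (ff_succ_self_mem_hessenbergIdeal hP hj)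
    (ff_succ_self_mem_hessenbergIdeal hP (by omega))

theorem pp_mem_hessenbergIdeal (hPn : h n = n) : pp n n ∈ hessenbergIdeal n h := by
  rcases Nat.eq_zero_or_pos n with rfl | hn
  · simp [pp]
  · have hmem : ff n (h n) n ∈ hessenbergIdeal n h := Ideal.subset_span ⟨n, ⟨hn, le_rfl⟩, rfl⟩
    rwa [hPn, ff_self] at hmem

end Peterson

theorem yv_zero (m : ℕ) : yv m 0 = 0 := by
  simp [yv]

theorem yv_sub_one_self (n : ℕ) : yv (n - 1) n = 0 := by
  simp only [yv, dite_eq_right_iff]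
  omega

theorem yv_succ {m : ℕ} (i : Fin m) : yv m (i + 1) = X (some i) := by
  simp [yv]

-- Inverts `y_j ↦ p_j` modulo `p_n`.
noncomputable def xToY (n : ℕ) :
    MvPolynomial (Option (Fin n)) ℚ →ₐ[ℚ] MvPolynomial (Option (Fin (n - 1))) ℚ :=
  aeval fun v => v.elim (X none) fun i =>
    yv (n - 1) (i + 1) - yv (n - 1) i + C ((i : ℚ) + 1) * X none

theorem xToY_tv (n : ℕ) : xToY n (tv n) = X none := by
  simp [xToY, tv]

theorem xToY_xv {n k : ℕ} (hk : k < n) :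
    xToY n (xv n (k + 1)) = yv (n - 1) (k + 1) - yv (n - 1) k + C ((k : ℚ) + 1) * X none := by
  simp [xToY, xv, hk]

theorem xToY_pp {n j : ℕ} (hj : j ≤ n) : xToY n (pp n j) = yv (n - 1) j := by
  induction j with
  | zero => simp [pp, yv_zero]
  | succ j ih =>
    rw [pp_succ, map_add, ih (by omega), map_sub, map_mul, xToY_xv (by omega), xToY_tv,
      algHom_C, algebraMap_eq]
    ring

theorem xToY_petersonRel {n j : ℕ} (hj : j + 1 ≤ n) :
    xToY n (petersonRel (pp n) (tv n) j) = petersonRel (yv (n - 1)) (X none) j := by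
  rw [map_petersonRel, xToY_tv]
  exact petersonRel_congr _ fun k _ hk => xToY_pp (hk.trans hj)

theorem mk_xToY_of_mem_hessenbergIdeal {n : ℕ} {h : ℕ → ℕ}
    (hP : ∀ j, 1 ≤ j → j ≤ n - 1 → h j = j + 1) (hPn : h n = n) :
    ∀ a ∈ hessenbergIdeal n h,
      (Ideal.Quotient.mkₐ ℚ (petersonRelIdeal (n - 1))).comp (xToY n) a = 0 := by
  suffices hle : hessenbergIdeal n h ≤ RingHom.ker
      ((Ideal.Quotient.mkₐ ℚ (petersonRelIdeal (n - 1))).comp (xToY n)) from fun a ha => hle ha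
  refine Ideal.span_le.2 ?_
  rintro _ ⟨j, ⟨hj₀, hjn⟩, rfl⟩
  simp only [SetLike.mem_coe, RingHom.mem_ker, AlgHom.comp_apply, Ideal.Quotient.mkₐ_eq_mk,
    Ideal.Quotient.eq_zero_iff_mem]
  rcases hjn.eq_or_lt with rfl | hjn
  · rw [hPn, ff_self, xToY_pp le_rfl, yv_sub_one_self]
    exact zero_mem _
  · rw [hP j hj₀ (by omega), ff_succ_self, map_sum]
    refine sum_mem fun k hk => ?_
    have hk := mem_range.1 hk
    rw [xToY_petersonRel (by omega)]
    exact Ideal.subset_span ⟨k + 1, ⟨by omega, by omega⟩, rfl⟩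

noncomputable def yToP (n : ℕ) (I : Ideal (MvPolynomial (Option (Fin n)) ℚ)) :
    MvPolynomial (Option (Fin (n - 1))) ℚ →ₐ[ℚ] MvPolynomial (Option (Fin n)) ℚ ⧸ I :=
  aeval fun v => v.elim (Ideal.Quotient.mk I (tv n)) fun j => Ideal.Quotient.mk I (pp n (j + 1))

section yToP

variable {n : ℕ} {I : Ideal (MvPolynomial (Option (Fin n)) ℚ)}

theorem yToP_X_none : yToP n I (X none) = Ideal.Quotient.mk I (tv n) := by
  simp [yToP]

theorem yToP_X_some (j : Fin (n - 1)) :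
    yToP n I (X (some j)) = Ideal.Quotient.mk I (pp n (j + 1)) := by
  simp [yToP]

theorem yToP_yv (hpn : pp n n ∈ I) {j : ℕ} (hj : j ≤ n) :
    yToP n I (yv (n - 1) j) = Ideal.Quotient.mk I (pp n j) := by
  rcases Nat.eq_zero_or_pos j with rfl | hj₀
  · simp [yv_zero, pp]
  rcases hj.eq_or_lt with rfl | hjn
  · rw [yv_sub_one_self, map_zero, eq_comm, Ideal.Quotient.eq_zero_iff_mem]
    exact hpn
  · obtain ⟨i, rfl⟩ : ∃ i : Fin (n - 1), j = i + 1 := ⟨⟨j - 1, by omega⟩, by simp; omega⟩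
    rw [yv_succ, yToP_X_some]

theorem yToP_petersonRel (hpn : pp n n ∈ I) {j : ℕ} (hj : j + 1 ≤ n) :
    yToP n I (petersonRel (yv (n - 1)) (X none) j) =
      Ideal.Quotient.mk I (petersonRel (pp n) (tv n) j) := by
  rw [map_petersonRel, map_petersonRel, yToP_X_none]
  exact petersonRel_congr _ fun k _ hk => yToP_yv hpn (hk.trans hj)

theorem yToP_of_mem_petersonRelIdeal (hpn : pp n n ∈ I)
    (hrel : ∀ j, 1 ≤ j → j ≤ n - 1 → petersonRel (pp n) (tv n) j ∈ I) :
    ∀ a ∈ petersonRelIdeal (n - 1), yToP n I a = 0 := by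
  suffices hle : petersonRelIdeal (n - 1) ≤ RingHom.ker (yToP n I) from fun a ha => hle ha
  refine Ideal.span_le.2 ?_
  rintro _ ⟨j, ⟨hj₀, hjn⟩, rfl⟩
  rw [SetLike.mem_coe, RingHom.mem_ker, yToP_petersonRel hpn (by omega),
    Ideal.Quotient.eq_zero_iff_mem]
  exact hrel j hj₀ hjn

theorem yToP_comp_xToY (hpn : pp n n ∈ I) : (yToP n I).comp (xToY n) = Ideal.Quotient.mkₐ ℚ I := by
  refine MvPolynomial.algHom_ext fun v => ?_
  rcases v with _ | i
  · exact (congrArg _ (xToY_tv n)).trans yToP_X_none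
  · have hx : X (some i) = xv n (i + 1) := by simp [xv]
    rw [AlgHom.comp_apply, hx, xToY_xv i.2, map_add, map_sub, map_mul, yToP_yv hpn i.2,
      yToP_yv hpn i.2.le, yToP_X_none, algHom_C, Ideal.Quotient.mkₐ_eq_mk, xv_succ]
    simp

theorem liftₐ_comp_yToP {J : Ideal (MvPolynomial (Option (Fin (n - 1))) ℚ)}
    (hxToY : ∀ a ∈ I, (Ideal.Quotient.mkₐ ℚ J).comp (xToY n) a = 0) :
    (Ideal.Quotient.liftₐ I _ hxToY).comp (yToP n I) = Ideal.Quotient.mkₐ ℚ J := by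
  refine MvPolynomial.algHom_ext fun v => ?_
  rcases v with _ | j
  · rw [AlgHom.comp_apply, yToP_X_none, ← Ideal.Quotient.mkₐ_eq_mk ℚ, ← AlgHom.comp_apply,
      Ideal.Quotient.liftₐ_comp, AlgHom.comp_apply, xToY_tv]
  · rw [AlgHom.comp_apply, yToP_X_some, ← Ideal.Quotient.mkₐ_eq_mk ℚ, ← AlgHom.comp_apply,
      Ideal.Quotient.liftₐ_comp, AlgHom.comp_apply, xToY_pp (by omega), yv_succ]

end yToP

theorem stmt7_general (n : ℕ) (h : ℕ → ℕ)
    (hP : ∀ j : ℕ, 1 ≤ j → j ≤ n - 1 → h j = j + 1) (hPn : h n = n)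
    (Ih : Ideal (MvPolynomial (Option (Fin n)) ℚ))
    (hIh : Ih = Ideal.span ((fun j => ff n (h j) j) '' Set.Icc 1 n))
    (J : Ideal (MvPolynomial (Option (Fin (n - 1))) ℚ))
    (hJ : J = Ideal.span
      ((fun j => (-(yv (n - 1) (j - 1)) + 2 * yv (n - 1) j - yv (n - 1) (j + 1)
          - 2 * X none) * yv (n - 1) j) '' Set.Icc 1 (n - 1)))
    (φ : MvPolynomial (Option (Fin (n - 1))) ℚ →ₐ[ℚ] (MvPolynomial (Option (Fin n)) ℚ ⧸ Ih))
    (hφ : φ = MvPolynomial.aeval (fun v => Option.elim v (Ideal.Quotient.mk Ih (tv n))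
      (fun j : Fin (n - 1) => Ideal.Quotient.mk Ih (pp n ((j : ℕ) + 1))))) :
    ∃ ψ : (MvPolynomial (Option (Fin (n - 1))) ℚ ⧸ J) ≃ₐ[ℚ]
        (MvPolynomial (Option (Fin n)) ℚ ⧸ Ih),
      ∀ g : MvPolynomial (Option (Fin (n - 1))) ℚ, ψ (Ideal.Quotient.mk J g) = φ g := by
  obtain rfl : Ih = hessenbergIdeal n h := hIh
  obtain rfl : J = petersonRelIdeal (n - 1) := hJ
  obtain rfl : φ = yToP n (hessenbergIdeal n h) := hφ
  have hpn := pp_mem_hessenbergIdeal hPn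
  have hxToY := mk_xToY_of_mem_hessenbergIdeal hP hPn
  exact Ideal.Quotient.exists_algEquiv_of_comp_eq_mkₐ _ (xToY n)
    (yToP_of_mem_petersonRelIdeal hpn fun _ hj₀ hj => petersonRel_pp_mem_hessenbergIdeal hP hj₀ hj)
    hxToY (liftₐ_comp_yToP hxToY) (yToP_comp_xToY hpn)

/-- For the Peterson Hessenberg function `h = (2,3,…,n,n)`, the `ℚ`-algebra homomorphism
`ℚ[y_1,…,y_{n-1},t] → ℚ[x_1,…,x_n,t]/I(h)` sending `y_j ↦ [p_j]` and `t ↦ [t]` descends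
to a `ℚ`-algebra isomorphism
`ℚ[y_1,…,y_{n-1},t]/((-y_{j-1} + 2y_j - y_{j+1} - 2t)·y_j : 1 ≤ j ≤ n-1) ≅
 ℚ[x_1,…,x_n,t]/I(h)` (with the conventions `y_0 = 0`, `y_n = 0`). -/
theorem stmt7 (n : ℕ) (hn : 2 ≤ n) (h : ℕ → ℕ)
    (hP : ∀ j : ℕ, 1 ≤ j → j ≤ n - 1 → h j = j + 1) (hPn : h n = n)
    (Ih : Ideal (MvPolynomial (Option (Fin n)) ℚ))
    (hIh : Ih = Ideal.span ((fun j => ff n (h j) j) '' Set.Icc 1 n))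
    (J : Ideal (MvPolynomial (Option (Fin (n - 1))) ℚ))
    (hJ : J = Ideal.span
      ((fun j => (-(yv (n - 1) (j - 1)) + 2 * yv (n - 1) j - yv (n - 1) (j + 1)
          - 2 * X none) * yv (n - 1) j) '' Set.Icc 1 (n - 1)))
    (φ : MvPolynomial (Option (Fin (n - 1))) ℚ →ₐ[ℚ] (MvPolynomial (Option (Fin n)) ℚ ⧸ Ih))
    (hφ : φ = MvPolynomial.aeval (fun v => Option.elim v (Ideal.Quotient.mk Ih (tv n))
      (fun j : Fin (n - 1) => Ideal.Quotient.mk Ih (pp n ((j : ℕ) + 1))))) :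
    ∃ ψ : (MvPolynomial (Option (Fin (n - 1))) ℚ ⧸ J) ≃ₐ[ℚ]
        (MvPolynomial (Option (Fin n)) ℚ ⧸ Ih),
      ∀ g : MvPolynomial (Option (Fin (n - 1))) ℚ, ψ (Ideal.Quotient.mk J g) = φ g :=
  stmt7_general n h hP hPn Ih hIh J hJ φ hφ
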